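/- For integers k ≥ 2 and n ≥ 2k-1, F(k,n) = F(k,n-1) + F(k,n-2) - ∑_{i=0}^{k-3} F(k, n-(2k-1)+i). -/

import Mathlib

/- Unrolling `F(n-2) = F(n-3) + F(n-2-k) = …` down to `F(n-k)` expresses `F(n-k)` as `F(n-2)` minus
`k-2` consecutive terms starting at `F(n-2k+1)`; substitute this into `F(n) = F(n-1) + F(n-k)`. -/

def genFib (k n : ℕ) : ℕ :=
  if h1 : n < k then n + 1
  else if h2 : k = 0 then 0
  else genFib k (n - 1) + genFib k (n - k)
  termination_by n
  decreasing_by all_goals omega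

def genLucas (k n : ℕ) : ℕ :=
  if n < 2 * k then n + 1
  else (k - 1) * genFib k (n - (2 * k - 1)) + genFib k (n - (k - 1))

lemma genFib_of_le {k n : ℕ} (hk : 1 ≤ k) (hn : k ≤ n) :
    genFib k n = genFib k (n - 1) + genFib k (n - k) := by
  rw [genFib, dif_neg (by omega), dif_neg (by omega)]

lemma genFib_add_eq_add_sum {k j : ℕ} (hk : 1 ≤ k) (hj : k ≤ j + 1) (d : ℕ) :
    genFib k (j + d) = genFib k j + ∑ i ∈ Finset.range d, genFib k (j + 1 - k + i) := by
  induction d with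
  | zero => simp
  | succ d ih =>
    rw [← add_assoc, genFib_of_le hk (by omega), Nat.add_sub_cancel, ih,
      Finset.sum_range_succ, show j + d + 1 - k = j + 1 - k + d by omega, add_assoc]

theorem stmt4 (k n : ℕ) (hk : 2 ≤ k) (hn : 2 * k - 1 ≤ n) :
    (genFib k n : ℤ) = (genFib k (n - 1) : ℤ) + (genFib k (n - 2) : ℤ)
      - ∑ i ∈ Finset.range (k - 2), (genFib k (n - (2 * k - 1) + i) : ℤ) := by
  have hrec := genFib_of_le (k := k) (n := n) (by omega) (by omega)
  have hunroll := genFib_add_eq_add_sum (k := k) (j := n - k) (by omega) (by omega) (k - 2)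
  rw [show n - k + (k - 2) = n - 2 by omega, show n - k + 1 - k = n - (2 * k - 1) by omega]
    at hunroll
  rw [hrec, hunroll]
  push_cast
  ring
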